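/- arXiv:2601.01045 — 2 statements merged into one kernel-verified Lean document; each statement's English description precedes it below -/
import Mathlib

section
/- Let w ∈ ℝ^m be a probability vector with all entries positive, and let 0 < a_j < b_j with ∑_j a_j < 1 < ∑_j b_j. Then any two solutions τ₁, τ₂ > 0 of ∑_j min(max(w_j/τ, a_j), b_j) = 1 yield the same clipped vector: min(max(w_j/τ₁, a_j), b_j) = min(max(w_j/τ₂, a_j), b_j) for every j. -/
private lemma clip_unique_aux
    (m : ℕ) (w a b : Fin m → ℝ)
    (hw : ∀ j, 0 < w j)
    (τ₁ τ₂ : ℝ) (hτ₁ : 0 < τ₁) (hτ₂ : 0 < τ₂) (hle : τ₁ ≤ τ₂)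
    (h₁ : ∑ j, min (max (w j / τ₁) (a j)) (b j) = 1)
    (h₂ : ∑ j, min (max (w j / τ₂) (a j)) (b j) = 1) :
    ∀ j, min (max (w j / τ₂) (a j)) (b j) = min (max (w j / τ₁) (a j)) (b j) := by
  have hterm : ∀ j ∈ Finset.univ, min (max (w j / τ₂) (a j)) (b j)
      ≤ min (max (w j / τ₁) (a j)) (b j) := by
    intro j _
    have hx : w j / τ₂ ≤ w j / τ₁ :=
      div_le_div_of_nonneg_left (hw j).le hτ₁ hle
    exact min_le_min (max_le_max hx le_rfl) le_rfl
  have hsum : ∑ j, min (max (w j / τ₂) (a j)) (b j)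
      = ∑ j, min (max (w j / τ₁) (a j)) (b j) := by rw [h₁, h₂]
  intro j
  exact (Finset.sum_eq_sum_iff_of_le hterm).mp hsum j (Finset.mem_univ j)

/-- any two positive solutions of the clipped-sum equation give the same
    clipped block-mass vector. -/
theorem clip_solution_unique
    (m : ℕ) (w a b : Fin m → ℝ)
    (hw : ∀ j, 0 < w j) (hwsum : ∑ j, w j = 1)
    (ha : ∀ j, 0 < a j) (hab : ∀ j, a j < b j)
    (hA : ∑ j, a j < 1) (hB : 1 < ∑ j, b j)
    (τ₁ τ₂ : ℝ) (hτ₁ : 0 < τ₁) (hτ₂ : 0 < τ₂)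
    (h₁ : ∑ j, min (max (w j / τ₁) (a j)) (b j) = 1)
    (h₂ : ∑ j, min (max (w j / τ₂) (a j)) (b j) = 1) :
    ∀ j, min (max (w j / τ₁) (a j)) (b j) = min (max (w j / τ₂) (a j)) (b j) := by
  rcases le_total τ₁ τ₂ with h | h
  · intro j; exact (clip_unique_aux m w a b hw τ₁ τ₂ hτ₁ hτ₂ h h₁ h₂ j).symm
  · intro j; exact clip_unique_aux m w a b hw τ₂ τ₁ hτ₂ hτ₁ h h₂ h₁ j
end

section
/- Let w ∈ ℝ^m be a probability vector with positive entries, and let [a_j, b_j] ⊆ (0, 1] be intervals with ∑_j a_j ≤ 1 ≤ ∑_j b_j. Consider minimizing f(v) = ∑_j w_j log(w_j/v_j) over probability vectors v with a_j ≤ v_j ≤ b_j. Then the minimizer v* exists, is unique, and is given by v*_j = min(max(w_j/τ*, a_j), b_j), where τ* > 0 is any solution of ∑_j min(max(w_j/τ, a_j), b_j) = 1. -/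
/-!
Clipping the scaled weights `w / τ` to the box gives, for a root `τ` of the clipped-sum equation, a
feasible point `c` satisfying the KKT conditions with multiplier `τ`: the partial derivatives
`w_j / c_j` of `-f` equal `τ` at interior coordinates, are at most `τ` at lower bounds and at least
`τ` at upper bounds. Hence `∑ (w_j / c_j) (v_j - c_j) ≤ τ ∑ (v_j - c_j) = 0` for every feasible `v`,
and `log x ≤ x - 1` (strict for `x ≠ 1`) turns this into `f c ≤ f v`, strictly unless `v = c`.
A root exists by the intermediate value theorem, since the clipped sum is continuous in `τ` and
moves from `∑ b` near `0` to `∑ a` near `∞`; as it is antitone coordinatewise, all roots give the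
same clipped vector.
-/

open Finset Filter Topology Set

namespace KLBoxProjection

variable {ι : Type*} {w a b v : ι → ℝ} {τ τ' : ℝ}

noncomputable def scaledClip (w a b : ι → ℝ) (τ : ℝ) (j : ι) : ℝ := min (max (w j / τ) (a j)) (b j)

lemma le_scaledClip {j : ι} (hab : a j ≤ b j) : a j ≤ scaledClip w a b τ j :=
  le_min (le_max_right _ _) hab

lemma scaledClip_le {j : ι} : scaledClip w a b τ j ≤ b j :=
  min_le_right _ _

lemma scaledClip_pos {j : ι} (ha : 0 < a j) (hab : a j ≤ b j) : 0 < scaledClip w a b τ j :=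
  ha.trans_le (le_scaledClip hab)

lemma scaledClip_anti (hw : ∀ j, 0 ≤ w j) (hτ : 0 < τ) (hle : τ ≤ τ') (j : ι) :
    scaledClip w a b τ' j ≤ scaledClip w a b τ j := by
  unfold scaledClip
  gcongr
  exact hw j

variable [Fintype ι]

lemma scaledClip_eq_of_sum_eq (hw : ∀ j, 0 ≤ w j) (hτ : 0 < τ) (hτ' : 0 < τ')
    (hsum : ∑ j, scaledClip w a b τ j = ∑ j, scaledClip w a b τ' j) :
    scaledClip w a b τ = scaledClip w a b τ' := by
  wlog hle : τ ≤ τ' generalizing τ τ'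
  · exact (this hτ' hτ hsum.symm (le_of_not_ge hle)).symm
  funext j
  exact ((sum_eq_sum_iff_of_le fun i _ => scaledClip_anti hw hτ hle i).1 hsum.symm j
    (mem_univ j)).symm

lemma eventually_scaledClip_eq_right (hw : ∀ j, 0 < w j) :
    ∀ᶠ τ in 𝓝[>] 0, ∀ j, scaledClip w a b τ j = b j := by
  refine eventually_all.2 fun j => ?_
  filter_upwards [(tendsto_inv_nhdsGT_zero.const_mul_atTop (hw j)).eventually_ge_atTop (b j)]
    with τ hτ
  exact min_eq_right (le_max_of_le_left (by rwa [div_eq_mul_inv]))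

lemma eventually_scaledClip_eq_left (ha : ∀ j, 0 < a j) (hab : ∀ j, a j ≤ b j) :
    ∀ᶠ τ in atTop, ∀ j, scaledClip w a b τ j = a j := by
  refine eventually_all.2 fun j => ?_
  filter_upwards [((tendsto_const_nhds (x := w j)).div_atTop tendsto_id).eventually
    (ge_mem_nhds (ha j))]
    with τ hτ
  rw [scaledClip, max_eq_right (show w j / τ ≤ a j from hτ), min_eq_left (hab j)]

lemma continuousOn_sum_scaledClip :
    ContinuousOn (fun τ => ∑ j, scaledClip w a b τ j) (Ioi 0) :=
  continuousOn_finsetSum _ fun _ _ =>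
    ((continuousOn_const.div continuousOn_id fun _ hτ => ne_of_gt hτ).sup
      continuousOn_const).inf continuousOn_const

theorem exists_pos_sum_scaledClip_eq_one (hw : ∀ j, 0 < w j) (ha : ∀ j, 0 < a j)
    (hab : ∀ j, a j ≤ b j) (hA : ∑ j, a j ≤ 1) (hB : 1 ≤ ∑ j, b j) :
    ∃ τ, 0 < τ ∧ ∑ j, scaledClip w a b τ j = 1 := by
  obtain ⟨τ₀, hτ₀b, hτ₀⟩ :=
    ((eventually_scaledClip_eq_right (a := a) (b := b) hw).and self_mem_nhdsWithin).exists
  obtain ⟨τ₁, hτ₁, hτ₁a⟩ :=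
    ((eventually_gt_atTop 0).and (eventually_scaledClip_eq_left (w := w) ha hab)).exists
  have hIcc : (1 : ℝ) ∈ Icc (∑ j, scaledClip w a b τ₁ j) (∑ j, scaledClip w a b τ₀ j) := by
    simp only [hτ₁a, hτ₀b]
    exact ⟨hA, hB⟩
  exact isPreconnected_Ioi.intermediate_value hτ₁ hτ₀ continuousOn_sum_scaledClip hIcc

lemma div_clip_mul_sub_le {w τ lo hi x : ℝ} (hw : 0 < w) (hτ : 0 < τ) (hlo : 0 < lo)
    (hx : lo ≤ x) (hx' : x ≤ hi) :
    w / min (max (w / τ) lo) hi * (x - min (max (w / τ) lo) hi) ≤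
      τ * (x - min (max (w / τ) lo) hi) := by
  rcases le_total hi (w / τ) with hhi | hhi
  · rw [min_eq_right (hhi.trans (le_max_left _ _))]
    exact mul_le_mul_of_nonpos_right ((le_div_comm₀ (hlo.trans_le (hx.trans hx')) hτ).1 hhi)
      (sub_nonpos.2 hx')
  rcases le_total (w / τ) lo with hwlo | hwlo
  · rw [max_eq_right hwlo, min_eq_left (hx.trans hx')]
    exact mul_le_mul_of_nonneg_right ((div_le_comm₀ hτ hlo).1 hwlo) (sub_nonneg.2 hx)
  · rw [max_eq_left hwlo, min_eq_left hhi, div_div_cancel₀ hw.ne']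

lemma sum_div_scaledClip_mul_sub_le_zero (hw : ∀ j, 0 < w j) (ha : ∀ j, 0 < a j) (hτ : 0 < τ)
    (hv : ∀ j, a j ≤ v j ∧ v j ≤ b j) (hsum : ∑ j, v j = ∑ j, scaledClip w a b τ j) :
    ∑ j, w j / scaledClip w a b τ j * (v j - scaledClip w a b τ j) ≤ 0 :=
  calc ∑ j, w j / scaledClip w a b τ j * (v j - scaledClip w a b τ j)
      ≤ ∑ j, τ * (v j - scaledClip w a b τ j) :=
        sum_le_sum fun j _ => div_clip_mul_sub_le (hw j) hτ (ha j) (hv j).1 (hv j).2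
    _ = τ * (∑ j, v j - ∑ j, scaledClip w a b τ j) := by rw [← mul_sum, sum_sub_distrib]
    _ = 0 := by rw [hsum, sub_self, mul_zero]

lemma mul_log_div_le {w x c : ℝ} (hw : 0 ≤ w) (hx : 0 < x) (hc : 0 < c) :
    w * Real.log (x / c) ≤ w / c * (x - c) :=
  calc w * Real.log (x / c) ≤ w * (x / c - 1) :=
        mul_le_mul_of_nonneg_left (Real.log_le_sub_one_of_pos (div_pos hx hc)) hw
    _ = w / c * (x - c) := by field_simp

lemma mul_log_div_lt {w x c : ℝ} (hw : 0 < w) (hx : 0 < x) (hc : 0 < c) (hxc : x ≠ c) :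
    w * Real.log (x / c) < w / c * (x - c) :=
  calc w * Real.log (x / c) < w * (x / c - 1) :=
        mul_lt_mul_of_pos_left (Real.log_lt_sub_one_of_pos (div_pos hx hc)
          (div_ne_one_of_ne hxc)) hw
    _ = w / c * (x - c) := by field_simp

noncomputable def klSum (w v : ι → ℝ) : ℝ := ∑ j, w j * Real.log (w j / v j)

lemma klSum_sub_klSum (hw : ∀ j, 0 < w j) {u : ι → ℝ} (hu : ∀ j, 0 < u j)
    (hv : ∀ j, 0 < v j) :
    klSum w u - klSum w v = ∑ j, w j * Real.log (v j / u j) := by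
  rw [klSum, klSum, ← sum_sub_distrib]
  refine sum_congr rfl fun j _ => ?_
  rw [Real.log_div (hw j).ne' (hu j).ne', Real.log_div (hw j).ne' (hv j).ne',
    Real.log_div (hv j).ne' (hu j).ne']
  ring

theorem klSum_scaledClip_lt (hw : ∀ j, 0 < w j) (ha : ∀ j, 0 < a j) (hτ : 0 < τ)
    (hv : ∀ j, a j ≤ v j ∧ v j ≤ b j) (hsum : ∑ j, v j = ∑ j, scaledClip w a b τ j)
    (hne : v ≠ scaledClip w a b τ) :
    klSum w (scaledClip w a b τ) < klSum w v := by
  have hvpos j : 0 < v j := (ha j).trans_le (hv j).1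
  have hcpos j : 0 < scaledClip w a b τ j := scaledClip_pos (ha j) ((hv j).1.trans (hv j).2)
  obtain ⟨j, hj⟩ := Function.ne_iff.1 hne
  rw [← sub_neg, klSum_sub_klSum hw hcpos hvpos]
  exact (sum_lt_sum (fun j _ => mul_log_div_le (hw j).le (hvpos j) (hcpos j))
    ⟨j, mem_univ j, mul_log_div_lt (hw j) (hvpos j) (hcpos j) hj⟩).trans_le
    (sum_div_scaledClip_mul_sub_le_zero hw ha hτ hv hsum)

theorem klSum_scaledClip_le (hw : ∀ j, 0 < w j) (ha : ∀ j, 0 < a j) (hτ : 0 < τ)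
    (hv : ∀ j, a j ≤ v j ∧ v j ≤ b j) (hsum : ∑ j, v j = ∑ j, scaledClip w a b τ j) :
    klSum w (scaledClip w a b τ) ≤ klSum w v := by
  rcases eq_or_ne v (scaledClip w a b τ) with rfl | hne
  · exact le_rfl
  · exact (klSum_scaledClip_lt hw ha hτ hv hsum hne).le

end KLBoxProjection

open KLBoxProjection

theorem kl_box_projection_closed_form_general
    (m : ℕ) (w a b : Fin m → ℝ)
    (hw0 : ∀ j, 0 < w j)
    (ha0 : ∀ j, 0 < a j) (hab : ∀ j, a j ≤ b j)
    (hA : ∑ j, a j ≤ 1) (hB : 1 ≤ ∑ j, b j) :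
    ∃ vstar : Fin m → ℝ,
      -- v* is feasible
      ((∀ j, a j ≤ vstar j ∧ vstar j ≤ b j) ∧ ∑ j, vstar j = 1) ∧
      -- v* minimizes f over the feasible set
      (∀ v : Fin m → ℝ, (∀ j, a j ≤ v j ∧ v j ≤ b j) → ∑ j, v j = 1 →
        ∑ j, w j * Real.log (w j / vstar j) ≤
          ∑ j, w j * Real.log (w j / v j)) ∧
      -- v* is the unique minimizer
      (∀ v : Fin m → ℝ, (∀ j, a j ≤ v j ∧ v j ≤ b j) → ∑ j, v j = 1 →
        (∀ v' : Fin m → ℝ, (∀ j, a j ≤ v' j ∧ v' j ≤ b j) → ∑ j, v' j = 1 →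
          ∑ j, w j * Real.log (w j / v j) ≤
            ∑ j, w j * Real.log (w j / v' j)) →
        v = vstar) ∧
      -- v* is given by scaling and clipping, for any root τ* of the clipped-sum equation
      (∀ τ : ℝ, 0 < τ → ∑ j, min (max (w j / τ) (a j)) (b j) = 1 →
        ∀ j, vstar j = min (max (w j / τ) (a j)) (b j)) := by
  obtain ⟨τ, hτ, hτ1⟩ := exists_pos_sum_scaledClip_eq_one hw0 ha0 hab hA hB
  have hfeas j : a j ≤ scaledClip w a b τ j ∧ scaledClip w a b τ j ≤ b j :=
    ⟨le_scaledClip (hab j), scaledClip_le⟩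
  refine ⟨scaledClip w a b τ, ⟨hfeas, hτ1⟩,
    fun v hv hv1 => klSum_scaledClip_le hw0 ha0 hτ hv (hv1.trans hτ1.symm), ?_, ?_⟩
  · intro v hv hv1 hmin
    by_contra hne
    exact (hmin _ hfeas hτ1).not_gt (klSum_scaledClip_lt hw0 ha0 hτ hv (hv1.trans hτ1.symm) hne)
  · intro τ' hτ' hτ'1 j
    exact congrFun (scaledClip_eq_of_sum_eq (fun j => (hw0 j).le) hτ hτ' (hτ1.trans hτ'1.symm)) j

/-- existence, uniqueness, and scaling-and-clipping closed form
    for the minimizer of f(v) = ∑ⱼ wⱼ log(wⱼ/vⱼ) over probability vectors v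
    in the box ∏ⱼ [aⱼ, bⱼ] ⊆ (0,1]^m. -/
theorem kl_box_projection_closed_form
    (m : ℕ) (w a b : Fin m → ℝ)
    (hw0 : ∀ j, 0 < w j) (hw1 : ∑ j, w j = 1)
    (ha0 : ∀ j, 0 < a j) (hab : ∀ j, a j ≤ b j) (hb1 : ∀ j, b j ≤ 1)
    (hA : ∑ j, a j ≤ 1) (hB : 1 ≤ ∑ j, b j) :
    ∃ vstar : Fin m → ℝ,
      -- v* is feasible
      ((∀ j, a j ≤ vstar j ∧ vstar j ≤ b j) ∧ ∑ j, vstar j = 1) ∧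
      -- v* minimizes f over the feasible set
      (∀ v : Fin m → ℝ, (∀ j, a j ≤ v j ∧ v j ≤ b j) → ∑ j, v j = 1 →
        ∑ j, w j * Real.log (w j / vstar j) ≤
          ∑ j, w j * Real.log (w j / v j)) ∧
      -- v* is the unique minimizer
      (∀ v : Fin m → ℝ, (∀ j, a j ≤ v j ∧ v j ≤ b j) → ∑ j, v j = 1 →
        (∀ v' : Fin m → ℝ, (∀ j, a j ≤ v' j ∧ v' j ≤ b j) → ∑ j, v' j = 1 →
          ∑ j, w j * Real.log (w j / v j) ≤
            ∑ j, w j * Real.log (w j / v' j)) →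
        v = vstar) ∧
      -- v* is given by scaling and clipping, for any root τ* of the clipped-sum equation
      (∀ τ : ℝ, 0 < τ → ∑ j, min (max (w j / τ) (a j)) (b j) = 1 →
        ∀ j, vstar j = min (max (w j / τ) (a j)) (b j)) :=
  kl_box_projection_closed_form_general m w a b hw0 ha0 hab hA hB
end
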